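/- Let S be a finite set of integers of cardinality k and Freiman dimension r = r_ℚ(S) (equivalently, the dimension of S in the sense of Freiman: the largest d such that S is Freiman 2-isomorphic to a subset of ℚ^d not contained in a proper affine subspace). Then |S +̂ S| ≥ r(k − (r+1)/2). -/

import Mathlib

/-!
Evaluation `a ↦ (φ ↦ φ a)` sends `S` to a Freiman-isomorphic copy `A` inside the dual of
`Hom₂(S, ℚ)`, a space of dimension `r + 1` spanned by `A`, so the affine span of `A` has
dimension at least `r`; and since Freiman homomorphisms respect equalities between sums,
`|A +̂ A| ≤ |S +̂ S|`.

The bound for a finite set `A` of affine dimension at least `r` in any vector space over an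
ordered field goes by induction on `|A|`, removing an exposed point `v`. If `A' = A \ {v}` still
has dimension at least `r`, a hyperplane separating `v` from `A'` can be rotated, keeping it
separating, until its face on `A'` has dimension at least `r - 1`; that face has at least `r`
points `b`, and each sum `v + b` exceeds, in the direction normal to the hyperplane, every sum
of two distinct points of `A'`. Otherwise `v` lies outside the affine span of `A'`, and all
`|A| - 1` sums `v + a` are new.
-/

/-- The `F`-vector space of Freiman 2-homomorphisms from `A` to `F`. -/
def freimanHoms (F : Type*) [Field F] {G : Type*} [AddCommGroup G] (A : Set G) :
    Submodule F (A → F) where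
  carrier := {φ | ∀ a b c d : A, (a : G) + b = (c : G) + d → φ a + φ b = φ c + φ d}
  add_mem' := by
    intro f g hf hg a b c d h
    have h1 := hf a b c d h
    have h2 := hg a b c d h
    simp only [Pi.add_apply]
    linear_combination h1 + h2
  zero_mem' := by intro a b c d h; simp
  smul_mem' := by
    intro c f hf a b c' d h
    have h1 := hf a b c' d h
    simp only [Pi.smul_apply, smul_eq_mul]
    linear_combination c * h1

/-- The Freiman dimension `r_F(A) = dim Hom₂(A, F) − 1`. -/
noncomputable def freimanDim (F : Type*) [Field F] {G : Type*} [AddCommGroup G]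
    (A : Set G) : ℕ :=
  Module.finrank F (freimanHoms F A) - 1

/-- A Freiman 2-homomorphism from `A` (as a subtype) to an abelian group `H`. -/
def IsFreiman2HomOn {G H : Type*} [AddCommGroup G] [AddCommGroup H] (A : Set G)
    (φ : A → H) : Prop :=
  ∀ a b c d : A, (a : G) + b = (c : G) + d → φ a + φ b = φ c + φ d

/-- The restricted sumset `X +̂ X = {x + y : x, y ∈ X, x ≠ y}`. -/
def hatAdd {G : Type*} [AddCommGroup G] [DecidableEq G] (X : Finset G) : Finset G :=
  ((X ×ˢ X).filter fun p => p.1 ≠ p.2).image fun p => p.1 + p.2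

open Module Finset

section RestrictedSumset

variable {G H : Type*} [AddCommGroup G] [AddCommGroup H] [DecidableEq G] [DecidableEq H]

lemma mem_hatAdd {X : Finset G} {z : G} :
    z ∈ hatAdd X ↔ ∃ a ∈ X, ∃ b ∈ X, a ≠ b ∧ a + b = z := by
  simp [hatAdd, and_assoc]

lemma hatAdd_mono {X Y : Finset G} (h : X ⊆ Y) : hatAdd X ⊆ hatAdd Y := by
  intro z hz
  obtain ⟨a, ha, b, hb, hab, rfl⟩ := mem_hatAdd.1 hz
  exact mem_hatAdd.2 ⟨a, h ha, b, h hb, hab, rfl⟩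

lemma card_hatAdd_erase_add_card_le {A B : Finset G} {v : G} (hv : v ∈ A)
    (hB : B ⊆ A.erase v) (hnew : ∀ b ∈ B, v + b ∉ hatAdd (A.erase v)) :
    #(hatAdd (A.erase v)) + #B ≤ #(hatAdd A) := by
  have hsub : hatAdd (A.erase v) ∪ B.image (v + ·) ⊆ hatAdd A := by
    refine union_subset (hatAdd_mono (erase_subset v A)) fun z hz => ?_
    obtain ⟨b, hb, rfl⟩ := mem_image.1 hz
    exact mem_hatAdd.2 ⟨v, hv, b, mem_of_mem_erase (hB hb), (ne_of_mem_erase (hB hb)).symm, rfl⟩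
  have hdisj : Disjoint (hatAdd (A.erase v)) (B.image (v + ·)) := by
    rw [disjoint_right]
    rintro _ hz
    obtain ⟨b, hb, rfl⟩ := mem_image.1 hz
    exact hnew b hb
  rw [← card_image_of_injective B (add_right_injective v), ← card_union_of_disjoint hdisj]
  exact card_le_card hsub

lemma card_hatAdd_image_le {S : Finset G} {f : G → H}
    (hf : ∀ a ∈ S, ∀ b ∈ S, ∀ c ∈ S, ∀ d ∈ S, a + b = c + d → f a + f b = f c + f d) :
    #(hatAdd (S.image f)) ≤ #(hatAdd S) := by
  refine card_le_card_of_forall_subsingleton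
    (fun y x => ∃ a ∈ S, ∃ b ∈ S, a ≠ b ∧ a + b = x ∧ f a + f b = y) ?_ ?_
  · intro y hy
    obtain ⟨_, ha, _, hb, hab, rfl⟩ := mem_hatAdd.1 hy
    obtain ⟨a, ha', rfl⟩ := mem_image.1 ha
    obtain ⟨b, hb', rfl⟩ := mem_image.1 hb
    exact ⟨a + b, mem_hatAdd.2 ⟨a, ha', b, hb', fun h => hab (h ▸ rfl), rfl⟩,
      a, ha', b, hb', fun h => hab (h ▸ rfl), rfl, rfl⟩
  · rintro x - y₁ ⟨-, a, ha, b, hb, -, rfl, rfl⟩ y₂ ⟨-, c, hc, d, hd, -, hcd, rfl⟩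
    exact (hf a ha b hb c hc d hd hcd.symm).symm ▸ rfl

end RestrictedSumset

section LinearAlgebra

variable {𝕜 W : Type*} [Field 𝕜] [AddCommGroup W] [Module 𝕜 W]

lemma exists_dual_injOn [Infinite 𝕜] (A : Finset W) : ∃ g : Dual 𝕜 W, Set.InjOn g A := by
  classical
  let kernels : Finset (Subspace 𝕜 (Dual 𝕜 W)) :=
    A.offDiag.image fun p => LinearMap.ker (Dual.eval 𝕜 W (p.1 - p.2))
  have htop : ⊤ ∉ kernels := by
    simp only [kernels, mem_image, mem_offDiag, not_exists, not_and]
    rintro p ⟨-, -, hp⟩ hker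
    obtain ⟨g, hg⟩ : ∃ g : Dual 𝕜 W, g (p.1 - p.2) ≠ 0 := by
      by_contra! h
      exact hp (sub_eq_zero.1 ((forall_dual_apply_eq_zero_iff 𝕜 _).1 h))
    exact hg (LinearMap.mem_ker.1 (hker ▸ Submodule.mem_top : g ∈ _))
  obtain ⟨g, hg⟩ := (Set.ne_univ_iff_exists_notMem _).1
    (Subspace.biUnion_ne_univ_of_top_notMem htop)
  refine ⟨g, fun a ha b hb hab => by_contra fun hne => hg ?_⟩
  refine Set.mem_biUnion (x := LinearMap.ker (Dual.eval 𝕜 W (a - b)))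
    (mem_coe.2 (mem_image_of_mem _ ((mem_offDiag (x := (a, b))).2 ⟨ha, hb, hne⟩))) ?_
  simp [hab]

lemma exists_dual_eq_zero_of_notMem {U : Submodule 𝕜 W} {x : W} (hx : x ∉ U) :
    ∃ h : Dual 𝕜 W, (∀ u ∈ U, h u = 0) ∧ h x = 1 := by
  obtain ⟨f, hfx, hfU⟩ := U.exists_dual_map_eq_bot_of_notMem hx inferInstance
  refine ⟨(f x)⁻¹ • f, fun u hu => ?_, by simp [hfx]⟩
  have : f u = 0 := (Submodule.mem_bot 𝕜).1 (hfU ▸ Submodule.mem_map_of_mem hu)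
  simp [this]

lemma Module.Dual.apply_eq_of_mem_affineSpan {h : Dual 𝕜 W} {s : Set W} {c : 𝕜}
    (hs : ∀ x ∈ s, h x = c) {x : W} (hx : x ∈ affineSpan 𝕜 s) : h x = c := by
  have : affineSpan 𝕜 s ≤ (AffineSubspace.mk' c ⊥).comap h.toAffineMap := by
    rw [affineSpan_le]
    intro y hy
    simp [hs y hy]
  simpa [sub_eq_zero] using this hx

lemma finrank_vectorSpan_add_one_le_card [DecidableEq W] {B : Finset W} (hB : B.Nonempty) :
    finrank 𝕜 (vectorSpan 𝕜 (B : Set W)) + 1 ≤ #B := by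
  obtain ⟨n, hn⟩ := Nat.exists_eq_add_of_lt hB.card_pos
  have := finrank_vectorSpan_image_finset_le 𝕜 id B (n := n) (by omega)
  rw [image_id] at this
  omega

lemma one_lt_card_of_finrank_vectorSpan_pos [DecidableEq W] {A : Finset W}
    (h : 0 < finrank 𝕜 (vectorSpan 𝕜 (A : Set W))) : 1 < #A := by
  rcases A.eq_empty_or_nonempty with rfl | hA
  · rw [coe_empty, vectorSpan_empty, finrank_bot] at h
    omega
  · have := finrank_vectorSpan_add_one_le_card (𝕜 := 𝕜) hA
    omega

variable [FiniteDimensional 𝕜 W]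

lemma finrank_vectorSpan_le_finrank_vectorSpan_erase_add_one [DecidableEq W] (A : Finset W)
    (v : W) :
    finrank 𝕜 (vectorSpan 𝕜 (A : Set W)) ≤ finrank 𝕜 (vectorSpan 𝕜 (A.erase v : Set W)) + 1 := by
  have hsub : (A : Set W) ⊆ insert v (A.erase v : Set W) := by
    rw [coe_erase, Set.insert_sdiff_singleton]
    exact Set.subset_insert v _
  exact (Submodule.finrank_mono (vectorSpan_mono 𝕜 hsub)).trans
    (finrank_vectorSpan_insert_le_set 𝕜 _ v)

lemma finrank_vectorSpan_lt_finrank_vectorSpan_insert {s : Set W} (hs : s.Nonempty) {x : W}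
    (hx : x ∉ affineSpan 𝕜 s) :
    finrank 𝕜 (vectorSpan 𝕜 s) < finrank 𝕜 (vectorSpan 𝕜 (insert x s)) := by
  have hlt : affineSpan 𝕜 s < affineSpan 𝕜 (insert x s) :=
    (affineSpan_mono 𝕜 (Set.subset_insert _ _)).lt_of_ne fun heq =>
      hx (heq ▸ mem_affineSpan 𝕜 (Set.mem_insert _ _))
  have := Submodule.finrank_lt_finrank_of_lt
    (AffineSubspace.direction_lt_of_nonempty hlt (hs.affineSpan 𝕜))
  rwa [direction_affineSpan, direction_affineSpan] at this

lemma finrank_span_le_finrank_vectorSpan_add_one (s : Set W) :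
    finrank 𝕜 (Submodule.span 𝕜 s) ≤ finrank 𝕜 (vectorSpan 𝕜 s) + 1 := by
  have : Submodule.span 𝕜 s ≤ vectorSpan 𝕜 (insert 0 s) := by
    rw [Submodule.span_le]
    intro x hx
    simpa using vsub_mem_vectorSpan 𝕜 (Set.mem_insert_of_mem 0 hx) (Set.mem_insert 0 s)
  exact (Submodule.finrank_mono this).trans (finrank_vectorSpan_insert_le_set 𝕜 s 0)

end LinearAlgebra

/-- Tilting the level set `f = M` about `h = c` until it meets a point with `h > c`. -/
lemma exists_pos_tilt_eq_max {𝕜 α : Type*} [Field 𝕜] [LinearOrder 𝕜] [IsStrictOrderedRing 𝕜]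
    (A : Finset α) (f h : α → 𝕜) {M c : 𝕜} (hM : ∀ a ∈ A, f a ≤ M)
    (hc : ∀ a ∈ A, f a = M → h a = c) (hp : ∃ p ∈ A, c < h p) :
    ∃ t > 0, (∀ a ∈ A, f a + t * (h a - c) ≤ M) ∧ ∃ a ∈ A, c < h a ∧ f a + t * (h a - c) = M := by
  classical
  obtain ⟨p, hpA, hp⟩ := hp
  obtain ⟨a₀, ha₀P, ha₀min⟩ := (A.filter fun a => c < h a).exists_min_image
    (fun a => (M - f a) / (h a - c)) ⟨p, mem_filter.2 ⟨hpA, hp⟩⟩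
  obtain ⟨ha₀A, ha₀c⟩ := mem_filter.1 ha₀P
  have hfa₀ : f a₀ < M := (hM a₀ ha₀A).lt_of_ne fun heq => ha₀c.ne' (hc a₀ ha₀A heq)
  have ht : 0 < (M - f a₀) / (h a₀ - c) := div_pos (sub_pos.2 hfa₀) (sub_pos.2 ha₀c)
  refine ⟨_, ht, fun a ha => ?_, a₀, ha₀A, ha₀c, by field_simp [(sub_pos.2 ha₀c).ne']; ring⟩
  rcases lt_or_ge c (h a) with hca | hac
  · have := ha₀min a (mem_filter.2 ⟨ha, hca⟩)
    rw [le_div_iff₀ (sub_pos.2 hca)] at this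
    linarith
  · linarith [hM a ha, mul_nonpos_of_nonneg_of_nonpos ht.le (sub_nonpos.2 hac)]

section ExposedFace

variable {𝕜 W : Type*} [Field 𝕜] [LinearOrder 𝕜] [AddCommGroup W] [Module 𝕜 W]

def exposedFace (g : Dual 𝕜 W) (A : Finset W) : Finset W :=
  A.filter fun a => ∀ a' ∈ A, g a' ≤ g a

lemma mem_exposedFace {g : Dual 𝕜 W} {A : Finset W} {x : W} :
    x ∈ exposedFace g A ↔ x ∈ A ∧ ∀ a ∈ A, g a ≤ g x :=
  mem_filter

lemma exposedFace_subset (g : Dual 𝕜 W) (A : Finset W) : exposedFace g A ⊆ A :=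
  filter_subset _ _

lemma exposedFace_nonempty (g : Dual 𝕜 W) {A : Finset W} (hA : A.Nonempty) :
    (exposedFace g A).Nonempty := by
  obtain ⟨b, hb, hmax⟩ := A.exists_max_image g hA
  exact ⟨b, mem_exposedFace.2 ⟨hb, hmax⟩⟩

variable [IsStrictOrderedRing 𝕜]

lemma exists_exposed_mem [DecidableEq W] {A : Finset W} (hA : A.Nonempty) :
    ∃ v ∈ A, ∃ g : Dual 𝕜 W, ∀ a ∈ A.erase v, g a < g v := by
  obtain ⟨g, hg⟩ := exists_dual_injOn (𝕜 := 𝕜) A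
  obtain ⟨v, hv, hvmax⟩ := A.exists_max_image g hA
  refine ⟨v, hv, g, fun a ha => (hvmax a (mem_of_mem_erase ha)).lt_of_ne fun h => ?_⟩
  exact ne_of_mem_erase ha (hg (mem_of_mem_erase ha) hv h)

lemma add_notMem_hatAdd_of_mem_exposedFace [DecidableEq W] {A : Finset W} {v b : W}
    {g : Dual 𝕜 W} (hsep : ∀ a ∈ A, g a < g v) (hb : b ∈ exposedFace g A) :
    v + b ∉ hatAdd A := by
  intro hvb
  obtain ⟨a₁, ha₁, a₂, ha₂, -, hsum⟩ := mem_hatAdd.1 hvb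
  obtain ⟨hbA, hbmax⟩ := mem_exposedFace.1 hb
  have : g a₁ + g a₂ = g v + g b := by rw [← map_add, ← map_add, hsum]
  linarith [hbmax a₁ ha₁, hbmax a₂ ha₂, hsep b hbA]

variable [FiniteDimensional 𝕜 W]

lemma exists_dual_const_lt_of_finrank_lt {s t : Set W} (hts : t ⊆ s) (ht : t.Nonempty)
    (hlt : finrank 𝕜 (vectorSpan 𝕜 t) < finrank 𝕜 (vectorSpan 𝕜 s)) :
    ∃ h : Dual 𝕜 W, ∃ c, (∀ x ∈ t, h x = c) ∧ ∃ p ∈ s, c < h p := by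
  obtain ⟨b, hb⟩ := ht
  obtain ⟨p, hps, hp⟩ : ∃ p ∈ s, p - b ∉ vectorSpan 𝕜 t := by
    by_contra! hall
    refine hlt.not_ge (Submodule.finrank_mono ?_)
    rw [vectorSpan_eq_span_vsub_set_right 𝕜 (hts hb), Submodule.span_le]
    rintro _ ⟨x, hx, rfl⟩
    exact hall x hx
  obtain ⟨h, hvan, hone⟩ := exists_dual_eq_zero_of_notMem hp
  refine ⟨h, h b, fun x hx => ?_, p, hps, ?_⟩
  · have := hvan _ (vsub_mem_vectorSpan 𝕜 hx hb)
    rwa [vsub_eq_sub, map_sub, sub_eq_zero] at this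
  · rw [map_sub] at hone
    linarith

/-- As long as the face is too small, some point `p` of `A` lies off the affine span of `v` and
the face; tilting the separating functional towards `p` about that span enlarges the face. -/
lemma exists_separating_dual_finrank_lt_exposedFace {A : Finset W} {v : W} {g : Dual 𝕜 W}
    (hsep : ∀ a ∈ A, g a < g v)
    (hlow : finrank 𝕜 (vectorSpan 𝕜 (exposedFace g A : Set W)) + 1 <
      finrank 𝕜 (vectorSpan 𝕜 (insert v (A : Set W)))) :
    ∃ g' : Dual 𝕜 W, (∀ a ∈ A, g' a < g' v) ∧
      finrank 𝕜 (vectorSpan 𝕜 (exposedFace g A : Set W)) <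
        finrank 𝕜 (vectorSpan 𝕜 (exposedFace g' A : Set W)) := by
  set B := exposedFace g A
  have hA : A.Nonempty := nonempty_iff_ne_empty.2 fun hA => by
    rw [hA, coe_empty, insert_empty_eq, vectorSpan_singleton, finrank_bot] at hlow
    omega
  obtain ⟨b₀, hb₀⟩ := exposedFace_nonempty g hA
  obtain ⟨hb₀A, hb₀max⟩ := mem_exposedFace.1 hb₀
  obtain ⟨h, c, hconst, p, hp, hcp⟩ := exists_dual_const_lt_of_finrank_lt
    (Set.insert_subset_insert (exposedFace_subset g A)) (Set.insert_nonempty v _)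
    (lt_of_le_of_lt (finrank_vectorSpan_insert_le_set 𝕜 _ v) hlow)
  have hcv : h v = c := hconst v (Set.mem_insert _ _)
  have hcB : ∀ b ∈ B, h b = c := fun b hb => hconst b (Set.mem_insert_of_mem v hb)
  have hpA : p ∈ A := (Set.mem_insert_iff.1 hp).resolve_left fun hpv => hcp.ne' (hpv ▸ hcv)
  obtain ⟨t, -, hbound, a₁, ha₁A, hca₁, ha₁⟩ := exists_pos_tilt_eq_max A g h hb₀max
    (fun a ha hga => hcB a (mem_exposedFace.2 ⟨ha, fun a' ha' => hga ▸ hb₀max a' ha'⟩))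
    ⟨p, hpA, hcp⟩
  have hface : ∀ x ∈ A, g x + t * (h x - c) = g b₀ → x ∈ exposedFace (g + t • h) A := by
    intro x hx hgx
    refine mem_exposedFace.2 ⟨hx, fun a ha => ?_⟩
    simp only [LinearMap.add_apply, LinearMap.smul_apply, smul_eq_mul]
    linarith [hbound a ha]
  refine ⟨g + t • h, fun a ha => ?_, ?_⟩
  · simp only [LinearMap.add_apply, LinearMap.smul_apply, smul_eq_mul, hcv]
    linarith [hbound a ha, hsep b₀ hb₀A]
  have hsub : insert a₁ (B : Set W) ⊆ exposedFace (g + t • h) A := by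
    refine Set.insert_subset (hface a₁ ha₁A ha₁) fun b hb => hface b (mem_filter.1 hb).1 ?_
    rw [hcB b hb, sub_self, mul_zero, add_zero]
    exact le_antisymm (hb₀max b (mem_filter.1 hb).1) ((mem_exposedFace.1 hb).2 b₀ hb₀A)
  have hnot : a₁ ∉ affineSpan 𝕜 (B : Set W) := fun ha₁B =>
    hca₁.ne' (Dual.apply_eq_of_mem_affineSpan hcB ha₁B)
  exact (finrank_vectorSpan_lt_finrank_vectorSpan_insert (coe_nonempty.2 ⟨b₀, hb₀⟩) hnot).trans_le
    (Submodule.finrank_mono (vectorSpan_mono 𝕜 hsub))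

lemma exists_separating_dual_finrank_le_exposedFace {A : Finset W} {v : W} (g : Dual 𝕜 W)
    (hsep : ∀ a ∈ A, g a < g v) :
    ∃ g' : Dual 𝕜 W, (∀ a ∈ A, g' a < g' v) ∧
      finrank 𝕜 (vectorSpan 𝕜 (insert v (A : Set W))) ≤
        finrank 𝕜 (vectorSpan 𝕜 (exposedFace g' A : Set W)) + 1 := by
  by_cases hdone : finrank 𝕜 (vectorSpan 𝕜 (insert v (A : Set W))) ≤
      finrank 𝕜 (vectorSpan 𝕜 (exposedFace g A : Set W)) + 1
  · exact ⟨g, hsep, hdone⟩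
  obtain ⟨g', hsep', hlt⟩ := exists_separating_dual_finrank_lt_exposedFace hsep (not_le.1 hdone)
  have := Submodule.finrank_le (vectorSpan 𝕜 (exposedFace g' A : Set W))
  exact exists_separating_dual_finrank_le_exposedFace g' hsep'
termination_by finrank 𝕜 W - finrank 𝕜 (vectorSpan 𝕜 (exposedFace g A : Set W))

lemma exists_separating_dual_exposedFace_eq {A : Finset W} {v : W} (hA : A.Nonempty)
    (hlt : finrank 𝕜 (vectorSpan 𝕜 (A : Set W)) <
      finrank 𝕜 (vectorSpan 𝕜 (insert v (A : Set W)))) :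
    ∃ g : Dual 𝕜 W, (∀ a ∈ A, g a < g v) ∧ exposedFace g A = A := by
  obtain ⟨h, c, hconst, p, hp, hcp⟩ :=
    exists_dual_const_lt_of_finrank_lt (Set.subset_insert v _) (coe_nonempty.2 hA) hlt
  have hpv : p = v := (Set.mem_insert_iff.1 hp).resolve_right fun hpA => hcp.ne' (hconst p hpA)
  refine ⟨h, fun a ha => hpv ▸ hconst a ha ▸ hcp, filter_true_of_mem fun a ha a' ha' => ?_⟩
  rw [hconst a ha, hconst a' ha']

variable [DecidableEq W]

lemma card_hatAdd_erase_add_finrank_le {A : Finset W} {v : W} {g : Dual 𝕜 W} (hv : v ∈ A)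
    (hA : (A.erase v).Nonempty) (hsep : ∀ a ∈ A.erase v, g a < g v) :
    #(hatAdd (A.erase v)) + finrank 𝕜 (vectorSpan 𝕜 (A : Set W)) ≤ #(hatAdd A) := by
  obtain ⟨g', hsep', hface⟩ := exists_separating_dual_finrank_le_exposedFace g hsep
  rw [coe_erase, Set.insert_sdiff_singleton, Set.insert_eq_of_mem (mem_coe.2 hv)] at hface
  have hcard := finrank_vectorSpan_add_one_le_card (𝕜 := 𝕜) (exposedFace_nonempty g' hA)
  have := card_hatAdd_erase_add_card_le hv (exposedFace_subset g' _)
    fun b hb => add_notMem_hatAdd_of_mem_exposedFace hsep' hb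
  omega

lemma card_hatAdd_erase_add_card_erase_le {A : Finset W} {v : W} (hv : v ∈ A)
    (hlt : finrank 𝕜 (vectorSpan 𝕜 (A.erase v : Set W)) < finrank 𝕜 (vectorSpan 𝕜 (A : Set W))) :
    #(hatAdd (A.erase v)) + #(A.erase v) ≤ #(hatAdd A) := by
  rcases (A.erase v).eq_empty_or_nonempty with hA | hA
  · rw [hA, card_empty, add_zero]
    exact card_le_card (hatAdd_mono (empty_subset A))
  rw [← Set.insert_eq_of_mem (mem_coe.2 hv), ← Set.insert_sdiff_singleton, ← coe_erase] at hlt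
  obtain ⟨g, hsep, hface⟩ := exists_separating_dual_exposedFace_eq hA hlt
  have := card_hatAdd_erase_add_card_le hv (exposedFace_subset g _)
    fun b hb => add_notMem_hatAdd_of_mem_exposedFace hsep hb
  rwa [hface] at this

theorem card_hatAdd_ge_of_le_finrank_vectorSpan (A : Finset W) (r : ℕ)
    (hr : r ≤ finrank 𝕜 (vectorSpan 𝕜 (A : Set W))) :
    (r : ℝ) * (#A - (r + 1) / 2) ≤ #(hatAdd A) := by
  induction A using Finset.strongInduction generalizing r with
  | H A ih =>
  obtain _ | r := r
  · simp
  have hA := one_lt_card_of_finrank_vectorSpan_pos (hr.trans_lt' r.succ_pos)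
  obtain ⟨v, hv, g, hsep⟩ := exists_exposed_mem (𝕜 := 𝕜) (card_pos.1 (one_pos.trans hA))
  have hcard : (#(A.erase v) : ℝ) = #A - 1 := by
    rw [card_erase_of_mem hv, Nat.cast_sub hA.le, Nat.cast_one]
  by_cases hdim : r + 1 ≤ finrank 𝕜 (vectorSpan 𝕜 (A.erase v : Set W))
  · have hA' : (A.erase v).Nonempty := card_pos.1
      (one_pos.trans (one_lt_card_of_finrank_vectorSpan_pos (hdim.trans_lt' r.succ_pos)))
    have hIH := ih _ (erase_ssubset hv) (r + 1) hdim
    have hstep : (#(hatAdd (A.erase v)) : ℝ) + (r + 1 : ℕ) ≤ #(hatAdd A) := by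
      exact_mod_cast (card_hatAdd_erase_add_finrank_le hv hA' hsep).trans' (by omega)
    rw [hcard] at hIH
    push_cast at hIH hstep ⊢
    linarith
  · have hIH := ih _ (erase_ssubset hv) r
      (by have := finrank_vectorSpan_le_finrank_vectorSpan_erase_add_one (𝕜 := 𝕜) A v; omega)
    have hstep : (#(hatAdd (A.erase v)) : ℝ) + #(A.erase v) ≤ #(hatAdd A) := by
      exact_mod_cast card_hatAdd_erase_add_card_erase_le (𝕜 := 𝕜) hv (by omega)
    rw [hcard] at hIH hstep
    push_cast
    nlinarith

end ExposedFace

section FreimanEval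

variable (F : Type*) [Field F] {G : Type*} [AddCommGroup G] (A : Set G)

noncomputable def freimanEval (x : G) : Dual F (freimanHoms F A) :=
  Function.extend Subtype.val
    (fun a : A => (LinearMap.proj a).comp (freimanHoms F A).subtype) 0 x

variable {F A}

lemma freimanEval_apply {a : G} (ha : a ∈ A) (φ : freimanHoms F A) :
    freimanEval F A a φ = (φ : A → F) ⟨a, ha⟩ := by
  simp [freimanEval, Subtype.val_injective.extend_apply _ _ (⟨a, ha⟩ : A)]

lemma freimanEval_add_eq {a b c d : G} (ha : a ∈ A) (hb : b ∈ A) (hc : c ∈ A) (hd : d ∈ A)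
    (h : a + b = c + d) :
    freimanEval F A a + freimanEval F A b = freimanEval F A c + freimanEval F A d := by
  ext φ
  simp only [LinearMap.add_apply, freimanEval_apply ha, freimanEval_apply hb,
    freimanEval_apply hc, freimanEval_apply hd]
  exact φ.2 ⟨a, ha⟩ ⟨b, hb⟩ ⟨c, hc⟩ ⟨d, hd⟩ h

lemma injOn_freimanEval [CharZero F] (A : Set ℤ) : Set.InjOn (freimanEval F A) A := by
  intro a ha b hb hab
  have hcast : (fun x : A => ((x : ℤ) : F)) ∈ freimanHoms F A := fun x y z w h => by
    simpa using congrArg (Int.cast : ℤ → F) h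
  have := congr($hab ⟨_, hcast⟩)
  rw [freimanEval_apply ha, freimanEval_apply hb] at this
  exact Int.cast_injective this

lemma finrank_span_freimanEval_image [Finite A] :
    finrank F (Submodule.span F (freimanEval F A '' A)) = finrank F (freimanHoms F A) := by
  have hbot : (Submodule.span F (freimanEval F A '' A)).dualCoannihilator = ⊥ := by
    refine (Submodule.eq_bot_iff _).2 fun φ hφ => Subtype.ext (funext fun a => ?_)
    rw [Submodule.mem_dualCoannihilator] at hφ
    rw [← freimanEval_apply a.2]
    exact hφ _ (Submodule.subset_span ⟨a, a.2, rfl⟩)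
  have := Subspace.finrank_add_finrank_dualCoannihilator_eq
    (Submodule.span F (freimanEval F A '' A))
  rwa [hbot, finrank_bot, add_zero] at this

lemma freimanDim_le_finrank_vectorSpan [Finite A] :
    freimanDim F A ≤ finrank F (vectorSpan F (freimanEval F A '' A)) := by
  have := finrank_span_le_finrank_vectorSpan_add_one (𝕜 := F) (freimanEval F A '' A)
  rw [finrank_span_freimanEval_image] at this
  unfold freimanDim
  omega

end FreimanEval

/-- Freiman's inequality: a finite set `S ⊆ ℤ` of cardinality `k` and Freiman dimension
`r = r_ℚ(S)` satisfies `|S +̂ S| ≥ r(k − (r+1)/2)`. -/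
theorem freiman_dimension_inequality (S : Finset ℤ) (k r : ℕ) (hk : S.card = k)
    (hr : r = freimanDim ℚ (S : Set ℤ)) :
    (r : ℝ) * ((k : ℝ) - ((r : ℝ) + 1) / 2) ≤ ((hatAdd S).card : ℝ) := by
  classical
  subst hk hr
  set A := S.image (freimanEval ℚ (S : Set ℤ))
  have hcard : #A = #S := card_image_of_injOn (injOn_freimanEval _)
  have hdim := freimanDim_le_finrank_vectorSpan (F := ℚ) (A := (S : Set ℤ))
  rw [← coe_image] at hdim
  have hsumset : #(hatAdd A) ≤ #(hatAdd S) :=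
    card_hatAdd_image_le fun a ha b hb c hc d hd => freimanEval_add_eq ha hb hc hd
  calc _ ≤ (#(hatAdd A) : ℝ) := hcard ▸ card_hatAdd_ge_of_le_finrank_vectorSpan A _ hdim
    _ ≤ #(hatAdd S) := by exact_mod_cast hsumset
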